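/- arXiv:2401.09026 — 7 statements merged into one kernel-verified Lean document; each statement's English description precedes it below -/
import Mathlib

section
/- Let C ⊆ ℝⁿ be a nonempty closed convex set that is approximately M-decomposable. Then C is hyperbolic, i.e. there exists a compact convex set M ⊆ ℝⁿ such that C ⊆ M + rec C. -/
open scoped InnerProductSpace Pointwise ENNReal
open Metric Filter

/-- The support function `σ_C(d) = sup_{x ∈ C} ⟪d, x⟫` of a set `C ⊆ ℝⁿ`,
with values in the extended reals. -/
noncomputable def suppFun {n : ℕ} (C : Set (EuclideanSpace ℝ (Fin n)))
    (d : EuclideanSpace ℝ (Fin n)) : EReal :=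
  ⨆ x ∈ C, ((⟪d, x⟫_ℝ : ℝ) : EReal)

/-- The effective domain `dom σ_C = {d : σ_C(d) < +∞}` of the support function. -/
def suppDom {n : ℕ} (C : Set (EuclideanSpace ℝ (Fin n))) :
    Set (EuclideanSpace ℝ (Fin n)) :=
  {d | suppFun C d < ⊤}

/-- The recession cone `rec C` of a set `C`. -/
def recCone {n : ℕ} (C : Set (EuclideanSpace ℝ (Fin n))) :
    Set (EuclideanSpace ℝ (Fin n)) :=
  {y | ∀ x ∈ C, ∀ t : ℝ, 0 ≤ t → x + t • y ∈ C}

/-- The truncation `C_r = (C ∩ rB) + rec C` of `C` of radius `r`. -/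
def trunc {n : ℕ} (C : Set (EuclideanSpace ℝ (Fin n))) (r : ℝ) :
    Set (EuclideanSpace ℝ (Fin n)) :=
  (C ∩ closedBall 0 r) + recCone C

/-- `C` is approximately M-decomposable: for every `ε > 0` there is `r > 0`
with `C ⊆ C_r + εB`. -/
def ApproxMDecomposable {n : ℕ} (C : Set (EuclideanSpace ℝ (Fin n))) : Prop :=
  ∀ ε > (0 : ℝ), ∃ r > (0 : ℝ), C ⊆ trunc C r + closedBall 0 ε

/-- `C` is M-decomposable: `C = M + rec C` for some compact convex `M`. -/
def MDecomposable {n : ℕ} (C : Set (EuclideanSpace ℝ (Fin n))) : Prop :=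
  ∃ M : Set (EuclideanSpace ℝ (Fin n)), IsCompact M ∧ Convex ℝ M ∧ C = M + recCone C

/-- `C` is hyperbolic: `C ⊆ M + rec C` for some compact convex `M`. -/
def Hyperbolic {n : ℕ} (C : Set (EuclideanSpace ℝ (Fin n))) : Prop :=
  ∃ M : Set (EuclideanSpace ℝ (Fin n)), IsCompact M ∧ Convex ℝ M ∧ C ⊆ M + recCone C

/-- The polar cone `K° = {d : ⟪d, x⟫ ≤ 0 for all x ∈ K}` of a cone `K`. -/
def polarCone {n : ℕ} (K : Set (EuclideanSpace ℝ (Fin n))) :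
    Set (EuclideanSpace ℝ (Fin n)) :=
  {d | ∀ x ∈ K, ⟪d, x⟫_ℝ ≤ 0}

/-- `C_r + εB = ((C ∩ rB) + εB) + rec C`, and `(C ∩ rB) + εB` is compact and convex. -/
theorem hyperbolic_of_subset_trunc_add_closedBall {n : ℕ} {C : Set (EuclideanSpace ℝ (Fin n))}
    (hcl : IsClosed C) (hconv : Convex ℝ C) {r ε : ℝ}
    (hsub : C ⊆ trunc C r + closedBall 0 ε) : Hyperbolic C :=
  ⟨C ∩ closedBall 0 r + closedBall 0 ε,
    ((isCompact_closedBall 0 r).inter_left hcl).add (isCompact_closedBall 0 ε),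
    (hconv.inter (convex_closedBall 0 r)).add (convex_closedBall 0 ε),
    add_right_comm (C ∩ closedBall 0 r) (recCone C) (closedBall 0 ε) ▸ hsub⟩

theorem approxMDecomposable_imp_hyperbolic_general {n : ℕ} (C : Set (EuclideanSpace ℝ (Fin n)))
    (hcl : IsClosed C) (hconv : Convex ℝ C)
    (h : ApproxMDecomposable C) : Hyperbolic C := by
  obtain ⟨r, -, hsub⟩ := h 1 one_pos
  exact hyperbolic_of_subset_trunc_add_closedBall hcl hconv hsub

/-- every approximately M-decomposable nonempty closed convex set
is hyperbolic. -/
theorem approxMDecomposable_imp_hyperbolic {n : ℕ} (C : Set (EuclideanSpace ℝ (Fin n)))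
    (hne : C.Nonempty) (hcl : IsClosed C) (hconv : Convex ℝ C)
    (h : ApproxMDecomposable C) : Hyperbolic C :=
  approxMDecomposable_imp_hyperbolic_general C hcl hconv h
end

section
/- Let C¹, C² ⊆ ℝⁿ be nonempty closed convex sets whose support functions have identical domains D = dom σ_{C¹} = dom σ_{C²}. Then the Hausdorff distance between C¹ and C² equals sup_{d ∈ D ∩ B} |σ_{C¹}(d) − σ_{C²}(d)|, where B is the closed Euclidean unit ball. -/
open scoped InnerProductSpace Pointwise ENNReal
open Metric Filter

/-! For a nonempty closed convex `A` and any `x`, `dist(x, A) = max_{‖d‖ ≤ 1} (⟪d, x⟫ - σ_A(d))`,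
the maximum being attained at the normalised `x - P_A x`, `P_A` the metric projection onto `A`;
this `d` lies in `dom σ_A`. For `x ∈ C` we have `⟪d, x⟫ ≤ σ_C(d)`, so `dist(x, A)` is at most
`σ_C(d) - σ_A(d)` for a `d ∈ dom σ_A ∩ B`, giving `d_H ≤ sup`. Conversely, the inequality
`⟪d, x⟫ - σ_A(d) ≤ dist(x, A) ≤ d_H(C, A)` for `x ∈ C`, `‖d‖ ≤ 1` yields
`σ_C(d) ≤ σ_A(d) + d_H(C, A)`, and symmetrically, giving `sup ≤ d_H`. -/

lemma EReal.abs_sub_comm (a b : EReal) : (a - b).abs = (b - a).abs := by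
  induction a using EReal.rec <;> induction b using EReal.rec
  case coe.coe a b =>
    rw [← EReal.coe_sub, ← EReal.coe_sub, EReal.abs_def, EReal.abs_def, _root_.abs_sub_comm]
  all_goals simp

section SupportFunction

variable {n : ℕ} {C A : Set (EuclideanSpace ℝ (Fin n))} {d x : EuclideanSpace ℝ (Fin n)}

lemma coe_inner_le_suppFun (hx : x ∈ C) (d : EuclideanSpace ℝ (Fin n)) :
    ((⟪d, x⟫_ℝ : ℝ) : EReal) ≤ suppFun C d :=
  le_iSup₂ (f := fun y (_ : y ∈ C) => ((⟪d, y⟫_ℝ : ℝ) : EReal)) x hx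

lemma suppFun_le_coe {r : ℝ} (h : ∀ x ∈ C, ⟪d, x⟫_ℝ ≤ r) : suppFun C d ≤ r :=
  iSup₂_le fun x hx => EReal.coe_le_coe_iff.2 (h x hx)

lemma suppFun_ne_bot (hC : C.Nonempty) (d : EuclideanSpace ℝ (Fin n)) : suppFun C d ≠ ⊥ := by
  obtain ⟨x, hx⟩ := hC
  exact ne_bot_of_le_ne_bot (EReal.coe_ne_bot _) (coe_inner_le_suppFun hx d)

lemma exists_suppFun_eq_coe (hC : C.Nonempty) (hd : d ∈ suppDom C) :
    ∃ r : ℝ, suppFun C d = r :=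
  ⟨_, (EReal.coe_toReal hd.ne (suppFun_ne_bot hC d)).symm⟩

lemma mem_suppDom_of_suppFun_eq_coe {r : ℝ} (h : suppFun C d = r) : d ∈ suppDom C := by
  simp [suppDom, h]

lemma inner_sub_le_infDist (hA : A.Nonempty) (hd : ‖d‖ ≤ 1) {r : ℝ} (hr : suppFun A d = r)
    (x : EuclideanSpace ℝ (Fin n)) : ⟪d, x⟫_ℝ - r ≤ infDist x A := by
  refine (le_infDist hA).2 fun y hy => ?_
  have hyr : ⟪d, y⟫_ℝ ≤ r := EReal.coe_le_coe_iff.1 (hr ▸ coe_inner_le_suppFun hy d)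
  calc ⟪d, x⟫_ℝ - r ≤ ⟪d, x - y⟫_ℝ := by rw [inner_sub_right]; linarith
    _ ≤ ‖d‖ * ‖x - y‖ := real_inner_le_norm d (x - y)
    _ ≤ ‖x - y‖ := mul_le_of_le_one_left (norm_nonneg _) hd
    _ = dist x y := (dist_eq_norm x y).symm

lemma exists_suppFun_eq_inner_sub_infDist (hA : A.Nonempty) (hcl : IsClosed A)
    (hconv : Convex ℝ A) (x : EuclideanSpace ℝ (Fin n)) :
    ∃ d, ‖d‖ ≤ 1 ∧ suppFun A d = ((⟪d, x⟫_ℝ - infDist x A : ℝ) : EReal) := by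
  obtain ⟨v, hv, hproj⟩ := exists_norm_eq_iInf_of_complete_convex hA hcl.isComplete hconv x
  have hdist : infDist x A = ‖x - v‖ := by
    rw [hproj, infDist_eq_iInf]
    simp only [dist_eq_norm]
  rw [norm_eq_iInf_iff_real_inner_le_zero hconv hv] at hproj
  -- no separate case for `x = v`: then `d = 0`, as `0⁻¹ = 0`
  set d := ‖x - v‖⁻¹ • (x - v)
  have hd : ‖d‖ ≤ 1 := by
    rw [norm_smul, norm_inv, norm_norm]
    exact inv_mul_le_one_of_le₀ le_rfl (norm_nonneg _)
  have hdx : ⟪d, x⟫_ℝ - infDist x A = ⟪d, v⟫_ℝ := by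
    have : ⟪d, x - v⟫_ℝ = ‖x - v‖ := by
      rw [real_inner_smul_left, real_inner_self_eq_norm_sq, sq, ← mul_assoc, inv_mul_mul_self]
    rw [hdist, ← this, inner_sub_right, sub_sub_cancel]
  refine ⟨d, hd, le_antisymm (suppFun_le_coe fun w hw => ?_) (hdx ▸ coe_inner_le_suppFun hv d)⟩
  have hwv : ⟪d, w - v⟫_ℝ ≤ 0 := by
    rw [real_inner_smul_left]
    exact mul_nonpos_of_nonneg_of_nonpos (inv_nonneg.2 (norm_nonneg _)) (hproj w hw)
  rw [hdx]
  rw [inner_sub_right] at hwv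
  linarith

lemma infEDist_le_iSup_abs_suppFun_sub (hA : A.Nonempty) (hcl : IsClosed A)
    (hconv : Convex ℝ A) (hx : x ∈ C) :
    infEDist x A ≤ ⨆ d ∈ suppDom A ∩ closedBall 0 1, (suppFun C d - suppFun A d).abs := by
  obtain ⟨d, hd, hdA⟩ := exists_suppFun_eq_inner_sub_infDist hA hcl hconv x
  refine le_iSup₂_of_le d ⟨mem_suppDom_of_suppFun_eq_coe hdA, mem_closedBall_zero_iff.2 hd⟩ ?_
  have hxC := coe_inner_le_suppFun hx d
  rw [hdA]
  generalize suppFun C d = σ at hxC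
  induction σ using EReal.rec with
  | bot => simp at hxC
  | top => rw [EReal.top_sub_coe, EReal.abs_top]; exact le_top
  | coe r =>
    rw [EReal.coe_le_coe_iff] at hxC
    calc infEDist x A = ENNReal.ofReal (infDist x A) :=
          (ENNReal.ofReal_toReal (infEDist_ne_top hA)).symm
      _ ≤ ENNReal.ofReal |r - (⟪d, x⟫_ℝ - infDist x A)| :=
          ENNReal.ofReal_le_ofReal (le_abs.2 (Or.inl (by linarith)))
      _ = _ := by rw [← EReal.coe_sub, EReal.abs_def]

lemma suppFun_le_add_hausdorffDist (hA : A.Nonempty) (hd : ‖d‖ ≤ 1) {s : ℝ}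
    (hs : suppFun A d = s) (hH : hausdorffEDist C A ≠ ⊤) :
    suppFun C d ≤ ((s + hausdorffDist C A : ℝ) : EReal) :=
  suppFun_le_coe fun x hx => by
    linarith [inner_sub_le_infDist hA hd hs x, infDist_le_hausdorffDist_of_mem hx hH]

lemma abs_suppFun_sub_le_hausdorffEDist (hA : A.Nonempty) (hdA : d ∈ suppDom A) (hd : ‖d‖ ≤ 1) :
    (suppFun C d - suppFun A d).abs ≤ hausdorffEDist C A := by
  by_cases hH : hausdorffEDist C A = ⊤
  · simp [hH]
  have hH' : hausdorffEDist A C ≠ ⊤ := by rwa [hausdorffEDist_comm]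
  have hC : C.Nonempty := nonempty_of_hausdorffEDist_ne_top hA hH'
  obtain ⟨s, hs⟩ := exists_suppFun_eq_coe hA hdA
  have hCs := suppFun_le_add_hausdorffDist hA hd hs hH
  obtain ⟨r, hr⟩ := exists_suppFun_eq_coe hC (hCs.trans_lt (EReal.coe_lt_top _))
  have hAr := suppFun_le_add_hausdorffDist hC hd hr hH'
  rw [hr, EReal.coe_le_coe_iff] at hCs
  rw [hs, hausdorffDist_comm, EReal.coe_le_coe_iff] at hAr
  calc (suppFun C d - suppFun A d).abs = ENNReal.ofReal |r - s| := by
        rw [hr, hs, ← EReal.coe_sub, EReal.abs_def]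
    _ ≤ ENNReal.ofReal (hausdorffDist C A) :=
        ENNReal.ofReal_le_ofReal (abs_sub_le_iff.2 ⟨by linarith, by linarith⟩)
    _ = hausdorffEDist C A := ENNReal.ofReal_toReal hH

end SupportFunction

/-- if two nonempty closed convex sets have support functions with
identical domains `D`, their Hausdorff distance is `sup_{d ∈ D ∩ B} |σ_{C¹}(d) − σ_{C²}(d)|`. -/
theorem hausdorffEdist_eq_sup_abs_suppFun_sub {n : ℕ}
    (C₁ C₂ : Set (EuclideanSpace ℝ (Fin n)))
    (h₁ne : C₁.Nonempty) (h₁cl : IsClosed C₁) (h₁conv : Convex ℝ C₁)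
    (h₂ne : C₂.Nonempty) (h₂cl : IsClosed C₂) (h₂conv : Convex ℝ C₂)
    (hdom : suppDom C₁ = suppDom C₂) :
    EMetric.hausdorffEdist C₁ C₂ =
      ⨆ d ∈ suppDom C₁ ∩ closedBall 0 1, (suppFun C₁ d - suppFun C₂ d).abs := by
  show hausdorffEDist C₁ C₂ = _
  apply le_antisymm
  · refine hausdorffEDist_le_of_infEDist (fun x hx => ?_) (fun x hx => ?_)
    · rw [hdom]
      exact infEDist_le_iSup_abs_suppFun_sub h₂ne h₂cl h₂conv hx
    · simpa only [EReal.abs_sub_comm] using infEDist_le_iSup_abs_suppFun_sub h₁ne h₁cl h₁conv hx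
  · refine iSup₂_le fun d ⟨hd, hdB⟩ => ?_
    exact abs_suppFun_sub_le_hausdorffEDist h₂ne (hdom ▸ hd) (mem_closedBall_zero_iff.1 hdB)
end

section
/- Let C ⊆ ℝⁿ be a nonempty closed convex set. If C is approximately M-decomposable, then dom σ_C is closed and σ_C is continuous relative to dom σ_C. -/
open scoped InnerProductSpace Pointwise ENNReal
open Metric Filter

/-!
If `C ⊆ C_r + εB`, every `x ∈ C` splits as `m + y + v` with `m ∈ C`, `‖m‖ ≤ r`, `y ∈ rec C`
and `‖v‖ ≤ ε`. For `d` in the polar cone of `rec C` this gives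
`⟪d, x⟫ ≤ σ_C(d₀) + ‖d - d₀‖ r + ‖d‖ ε` for every `d₀`. Taking `d₀ = 0` shows that `dom σ_C` is
the polar cone of `rec C`, which is closed; letting `d → d₀` with `ε` small shows that `σ_C` is
upper semicontinuous on it. Lower semicontinuity holds for every support function, being a
supremum of linear functions.
-/

open scoped Topology

section SupportFunction

variable {n : ℕ} {C : Set (EuclideanSpace ℝ (Fin n))} {d : EuclideanSpace ℝ (Fin n)}

theorem suppFun_le_coe_iff {a : ℝ} : suppFun C d ≤ a ↔ ∀ x ∈ C, ⟪d, x⟫_ℝ ≤ a := by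
  simp only [suppFun, iSup₂_le_iff, EReal.coe_le_coe_iff]

theorem mem_suppDom_iff : d ∈ suppDom C ↔ ∃ a : ℝ, suppFun C d ≤ a := by
  refine ⟨fun hd => ?_, fun ⟨a, ha⟩ => ha.trans_lt (EReal.coe_lt_top a)⟩
  obtain ⟨a, ha, -⟩ := EReal.lt_iff_exists_real_btwn.1 hd
  exact ⟨a, ha.le⟩

theorem lowerSemicontinuous_suppFun (C : Set (EuclideanSpace ℝ (Fin n))) :
    LowerSemicontinuous (suppFun C) :=
  lowerSemicontinuous_biSup fun _ _ =>
    (continuous_coe_real_ereal.comp (continuous_id.inner continuous_const)).lowerSemicontinuous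

theorem isClosed_polarCone (K : Set (EuclideanSpace ℝ (Fin n))) : IsClosed (polarCone K) := by
  have : polarCone K = ⋂ x ∈ K, {d | ⟪d, x⟫_ℝ ≤ 0} := by ext; simp [polarCone]
  rw [this]
  exact isClosed_biInter fun _ _ =>
    isClosed_le (continuous_id.inner continuous_const) continuous_const

theorem suppDom_subset_polarCone_recCone (hne : C.Nonempty) :
    suppDom C ⊆ polarCone (recCone C) := by
  intro d hd y hy
  obtain ⟨a, ha⟩ := mem_suppDom_iff.1 hd
  obtain ⟨x, hx⟩ := hne
  by_contra! hdy
  have hxa : ⟪d, x⟫_ℝ ≤ a := suppFun_le_coe_iff.1 ha x hx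
  -- `x + t • y` with this `t` would exceed the bound `a`
  set t := (a - ⟪d, x⟫_ℝ + 1) / ⟪d, y⟫_ℝ
  have hxt := suppFun_le_coe_iff.1 ha _ (hy x hx t (div_nonneg (by linarith) hdy.le))
  rw [inner_add_right, real_inner_smul_right, div_mul_cancel₀ _ hdy.ne'] at hxt
  linarith

theorem suppFun_le_of_subset_trunc_add_closedBall {r ε a : ℝ} {d₀ : EuclideanSpace ℝ (Fin n)}
    (hC : C ⊆ trunc C r + closedBall 0 ε) (hd : d ∈ polarCone (recCone C))
    (ha : suppFun C d₀ ≤ a) :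
    suppFun C d ≤ ((a + ‖d - d₀‖ * r + ‖d‖ * ε : ℝ) : EReal) := by
  refine suppFun_le_coe_iff.2 fun x hx => ?_
  obtain ⟨_, ⟨m, ⟨hmC, hm⟩, y, hy, rfl⟩, v, hv, rfl⟩ := hC hx
  rw [mem_closedBall_zero_iff] at hm hv
  have hsplit : ⟪d, m + y + v⟫_ℝ = ⟪d₀, m⟫_ℝ + ⟪d - d₀, m⟫_ℝ + ⟪d, y⟫_ℝ + ⟪d, v⟫_ℝ := by
    rw [inner_sub_left, inner_add_right, inner_add_right]; ring
  have hm' : ⟪d - d₀, m⟫_ℝ ≤ ‖d - d₀‖ * r := (real_inner_le_norm _ _).trans (by gcongr)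
  have hv' : ⟪d, v⟫_ℝ ≤ ‖d‖ * ε := (real_inner_le_norm _ _).trans (by gcongr)
  linarith [suppFun_le_coe_iff.1 ha m hmC, hd y hy]

theorem ApproxMDecomposable.polarCone_recCone_subset_suppDom (h : ApproxMDecomposable C) :
    polarCone (recCone C) ⊆ suppDom C := fun _ hd =>
  let ⟨_, _, hC⟩ := h 1 one_pos
  mem_suppDom_iff.2 ⟨_, suppFun_le_of_subset_trunc_add_closedBall hC hd
    (suppFun_le_coe_iff.2 fun x _ => (inner_zero_left x).le)⟩

theorem ApproxMDecomposable.suppDom_eq_polarCone_recCone (h : ApproxMDecomposable C)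
    (hne : C.Nonempty) : suppDom C = polarCone (recCone C) :=
  (suppDom_subset_polarCone_recCone hne).antisymm h.polarCone_recCone_subset_suppDom

theorem ApproxMDecomposable.upperSemicontinuousOn_suppFun (h : ApproxMDecomposable C) :
    UpperSemicontinuousOn (suppFun C) (polarCone (recCone C)) := by
  intro d₀ _ b hb
  obtain ⟨a, ha, hab⟩ := EReal.lt_iff_exists_real_btwn.1 hb
  obtain ⟨a', haa', ha'b⟩ := EReal.lt_iff_exists_real_btwn.1 hab
  obtain ⟨ε, hε, hεd₀⟩ := exists_pos_mul_lt (sub_pos.2 (EReal.coe_lt_coe_iff.1 haa')) ‖d₀‖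
  obtain ⟨r, -, hC⟩ := h ε hε
  have hbound : Tendsto (fun d => a + ‖d - d₀‖ * r + ‖d‖ * ε) (𝓝 d₀)
      (𝓝 (a + ‖d₀ - d₀‖ * r + ‖d₀‖ * ε)) :=
    (by fun_prop : Continuous fun d => a + ‖d - d₀‖ * r + ‖d‖ * ε).tendsto d₀
  have hbound_d₀ : a + ‖d₀ - d₀‖ * r + ‖d₀‖ * ε < a' := by
    rw [sub_self, norm_zero, zero_mul, add_zero]; linarith
  filter_upwards [self_mem_nhdsWithin,
    nhdsWithin_le_nhds (hbound.eventually_lt_const hbound_d₀)] with d hd hlt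
  exact (suppFun_le_of_subset_trunc_add_closedBall hC hd ha.le).trans_lt
    ((EReal.coe_lt_coe_iff.2 hlt).trans ha'b)

end SupportFunction

theorem approxMDecomposable_imp_suppDom_closed_and_continuousOn_general {n : ℕ}
    (C : Set (EuclideanSpace ℝ (Fin n)))
    (hne : C.Nonempty)
    (h : ApproxMDecomposable C) :
    IsClosed (suppDom C) ∧ ContinuousOn (suppFun C) (suppDom C) := by
  rw [h.suppDom_eq_polarCone_recCone hne]
  exact ⟨isClosed_polarCone _, fun d hd =>
    continuousWithinAt_iff_lower_upperSemicontinuousWithinAt.2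
      ⟨(lowerSemicontinuous_suppFun C).lowerSemicontinuousWithinAt _ d,
        h.upperSemicontinuousOn_suppFun d hd⟩⟩

/-- if `C` is approximately M-decomposable, then `dom σ_C` is closed
and `σ_C` is continuous relative to `dom σ_C`. -/
theorem approxMDecomposable_imp_suppDom_closed_and_continuousOn {n : ℕ}
    (C : Set (EuclideanSpace ℝ (Fin n)))
    (hne : C.Nonempty) (hcl : IsClosed C) (hconv : Convex ℝ C)
    (h : ApproxMDecomposable C) :
    IsClosed (suppDom C) ∧ ContinuousOn (suppFun C) (suppDom C) :=
  approxMDecomposable_imp_suppDom_closed_and_continuousOn_general C hne h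
end

section
/- Let C ⊆ ℝⁿ be a nonempty closed convex set that is approximately M-decomposable. Then dom σ_C = (rec C)°, the polar cone of the recession cone of C. -/
/-!
A direction `d` with `⟪d, y⟫ > 0` for some recession direction `y` makes `⟪d, ·⟫` unbounded on the
ray `x₀ + ℝ≥0 • y ⊆ C`, so `dom σ_C ⊆ (rec C)°` holds for every nonempty `C`. Conversely, if
`d ∈ (rec C)°`, then on `C_r + B` the functional `⟪d, ·⟫` is at most `‖d‖ (r + 1)`, since it is
`≤ 0` on `rec C`; approximate M-decomposability with `ε = 1` puts `C` inside such a set.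
-/

open scoped InnerProductSpace Pointwise ENNReal
open Metric Filter

section

variable {n : ℕ} {C : Set (EuclideanSpace ℝ (Fin n))} {d : EuclideanSpace ℝ (Fin n)}

theorem suppFun_lt_top_iff : suppFun C d < ⊤ ↔ ∃ c : ℝ, ∀ x ∈ C, ⟪d, x⟫_ℝ ≤ c := by
  constructor
  · intro hd
    obtain ⟨c, hc, -⟩ := EReal.lt_iff_exists_real_btwn.mp hd
    refine ⟨c, fun x hx => EReal.coe_le_coe_iff.mp ?_⟩
    exact (le_iSup₂ (f := fun x (_ : x ∈ C) => ((⟪d, x⟫_ℝ : ℝ) : EReal)) x hx).trans hc.le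
  · rintro ⟨c, hc⟩
    refine lt_of_le_of_lt ?_ (EReal.coe_lt_top c)
    exact iSup₂_le fun x hx => EReal.coe_le_coe_iff.mpr (hc x hx)

theorem mem_polarCone_recCone_of_forall_inner_le (hne : C.Nonempty) {c : ℝ}
    (hc : ∀ x ∈ C, ⟪d, x⟫_ℝ ≤ c) : d ∈ polarCone (recCone C) := by
  intro y hy
  obtain ⟨x₀, hx₀⟩ := hne
  have hray : ∀ t : ℝ, 0 ≤ t → ⟪d, x₀⟫_ℝ + t * ⟪d, y⟫_ℝ ≤ c := fun t ht => by
    simpa only [inner_add_right, real_inner_smul_right] using hc _ (hy x₀ hx₀ t ht)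
  by_contra! hpos
  -- at this time the ray has climbed one unit above the bound `c`
  have hescape := hray ((c - ⟪d, x₀⟫_ℝ + 1) / ⟪d, y⟫_ℝ)
    (div_nonneg (by linarith [hray 0 le_rfl]) hpos.le)
  rw [div_mul_cancel₀ _ hpos.ne'] at hescape
  linarith

theorem inner_le_of_mem_closedBall_zero {x : EuclideanSpace ℝ (Fin n)} {r : ℝ}
    (hx : x ∈ closedBall 0 r) : ⟪d, x⟫_ℝ ≤ ‖d‖ * r :=
  (real_inner_le_norm d x).trans
    (mul_le_mul_of_nonneg_left (mem_closedBall_zero_iff.mp hx) (norm_nonneg d))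

theorem inner_le_of_mem_trunc_add_closedBall (hd : d ∈ polarCone (recCone C))
    {r ε : ℝ} {x : EuclideanSpace ℝ (Fin n)} (hx : x ∈ trunc C r + closedBall 0 ε) :
    ⟪d, x⟫_ℝ ≤ ‖d‖ * (r + ε) := by
  obtain ⟨_, ⟨m, hm, y, hy, rfl⟩, b, hb, rfl⟩ := hx
  have hm' := inner_le_of_mem_closedBall_zero (d := d) hm.2
  have hb' := inner_le_of_mem_closedBall_zero (d := d) hb
  rw [inner_add_right, inner_add_right]
  linarith [hd y hy]

theorem ApproxMDecomposable.exists_forall_inner_le (h : ApproxMDecomposable C)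
    (hd : d ∈ polarCone (recCone C)) : ∃ c : ℝ, ∀ x ∈ C, ⟪d, x⟫_ℝ ≤ c := by
  obtain ⟨r, -, hsub⟩ := h 1 one_pos
  exact ⟨‖d‖ * (r + 1), fun x hx => inner_le_of_mem_trunc_add_closedBall hd (hsub hx)⟩

end

theorem approxMDecomposable_suppDom_eq_polar_recCone_general {n : ℕ}
    (C : Set (EuclideanSpace ℝ (Fin n)))
    (hne : C.Nonempty)
    (h : ApproxMDecomposable C) :
    suppDom C = polarCone (recCone C) := by
  ext d
  rw [suppDom, Set.mem_ofPred_eq, suppFun_lt_top_iff]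
  constructor
  · rintro ⟨c, hc⟩
    exact mem_polarCone_recCone_of_forall_inner_le hne hc
  · exact h.exists_forall_inner_le

/-- if `C` is approximately M-decomposable, then `dom σ_C = (rec C)°`. -/
theorem approxMDecomposable_suppDom_eq_polar_recCone {n : ℕ}
    (C : Set (EuclideanSpace ℝ (Fin n)))
    (hne : C.Nonempty) (hcl : IsClosed C) (hconv : Convex ℝ C)
    (h : ApproxMDecomposable C) :
    suppDom C = polarCone (recCone C) :=
  approxMDecomposable_suppDom_eq_polar_recCone_general C hne h
end

section
/- Let C ⊆ ℝⁿ be a nonempty closed convex set and r > 0 be such that the truncation C_r is nonempty. Then C_r is M-decomposable with compact component C ∩ rB, i.e. C_r is closed and convex, C ∩ rB is compact and convex, and C_r = (C ∩ rB) + rec C_r with rec C_r = rec C. -/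
open scoped InnerProductSpace Pointwise ENNReal
open Metric Filter

/-! The component `C ∩ rB` is compact and `rec C` is a closed convex cone, so `C_r` is closed and
convex. Since `C_r ⊆ C` is nonempty and, for closed convex `C`, a ray lying in `C` from one point
lies in `C` from every point, `rec C_r ⊆ rec C`; the reverse inclusion holds for `M + rec C` with
any `M`. -/

open Topology

theorem Convex.add_smul_mem_of_isClosed_of_ray {E : Type*} [AddCommGroup E] [Module ℝ E]
    [TopologicalSpace E] [IsTopologicalAddGroup E] [ContinuousSMul ℝ E] {C : Set E}
    (hcl : IsClosed C) (hconv : Convex ℝ C) {x₀ y : E}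
    (hray : ∀ t : ℝ, 0 ≤ t → x₀ + t • y ∈ C) {x : E} (hx : x ∈ C) {t : ℝ} (ht : 0 ≤ t) :
    x + t • y ∈ C := by
  -- `f a = (1 - a) x + a (x₀ + (t / a) y) ∈ C` for `a ∈ (0, 1)`, and `f a → x + t y` as `a → 0⁺`.
  set f : ℝ → E := fun a => (1 - a) • x + a • x₀ + t • y
  have hf : Tendsto f (𝓝[>] 0) (𝓝 (x + t • y)) := by
    have : Continuous f := by fun_prop
    simpa [f] using this.continuousWithinAt.tendsto (x := 0) (s := Set.Ioi 0)
  refine hcl.mem_of_tendsto hf ?_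
  filter_upwards [Ioo_mem_nhdsGT zero_lt_one] with a ⟨ha0, ha1⟩
  have hcomb : (1 - a) • x + a • (x₀ + (t / a) • y) = f a := by
    rw [smul_add, smul_smul, mul_div_cancel₀ _ ha0.ne', ← add_assoc]
  rw [← hcomb]
  exact hconv hx (hray _ (div_nonneg ht ha0.le)) (by linarith) ha0.le (by ring)

section RecessionCone

variable {n : ℕ} {C : Set (EuclideanSpace ℝ (Fin n))}

lemma recCone_add_mem {y z : EuclideanSpace ℝ (Fin n)}
    (hy : y ∈ recCone C) (hz : z ∈ recCone C) : y + z ∈ recCone C := by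
  intro x hx t ht
  have : x + t • (y + z) = (x + t • y) + t • z := by module
  rw [this]
  exact hz _ (hy x hx t ht) t ht

lemma recCone_smul_mem {y : EuclideanSpace ℝ (Fin n)} {s : ℝ}
    (hy : y ∈ recCone C) (hs : 0 ≤ s) : s • y ∈ recCone C := by
  intro x hx t ht
  have : x + t • s • y = x + (t * s) • y := by module
  rw [this]
  exact hy x hx _ (mul_nonneg ht hs)

lemma convex_recCone : Convex ℝ (recCone C) :=
  fun _ hy _ hz _ _ ha hb _ => recCone_add_mem (recCone_smul_mem hy ha) (recCone_smul_mem hz hb)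

lemma isClosed_recCone (hcl : IsClosed C) : IsClosed (recCone C) := by
  have : recCone C = ⋂ x ∈ C, ⋂ t ∈ Set.Ici (0 : ℝ), (fun y => x + t • y) ⁻¹' C := by
    ext y
    simp [recCone, Set.mem_iInter]
  rw [this]
  exact isClosed_biInter fun x _ => isClosed_biInter fun t _ =>
    hcl.preimage (continuous_const.add (continuous_id.const_smul t))

lemma mem_recCone_of_ray (hcl : IsClosed C) (hconv : Convex ℝ C)
    {x₀ y : EuclideanSpace ℝ (Fin n)}
    (hray : ∀ t : ℝ, 0 ≤ t → x₀ + t • y ∈ C) : y ∈ recCone C :=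
  fun _ hx _ ht => hconv.add_smul_mem_of_isClosed_of_ray hcl hray hx ht

lemma recCone_subset_of_subset {D : Set (EuclideanSpace ℝ (Fin n))} (hD : D.Nonempty)
    (hDC : D ⊆ C) (hcl : IsClosed C) (hconv : Convex ℝ C) : recCone D ⊆ recCone C := by
  obtain ⟨p, hp⟩ := hD
  exact fun y hy => mem_recCone_of_ray hcl hconv fun t ht => hDC (hy p hp t ht)

lemma recCone_subset_recCone_add_recCone (M : Set (EuclideanSpace ℝ (Fin n))) :
    recCone C ⊆ recCone (M + recCone C) := by
  rintro y hy _ ⟨m, hm, u, hu, rfl⟩ t ht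
  exact ⟨m, hm, u + t • y, recCone_add_mem hu (recCone_smul_mem hy ht), by module⟩

lemma trunc_subset (r : ℝ) : trunc C r ⊆ C := by
  rintro _ ⟨m, ⟨hm, -⟩, u, hu, rfl⟩
  simpa using hu m hm 1 zero_le_one

lemma recCone_trunc (hcl : IsClosed C) (hconv : Convex ℝ C) {r : ℝ}
    (hner : (trunc C r).Nonempty) : recCone (trunc C r) = recCone C :=
  (recCone_subset_of_subset hner (trunc_subset r) hcl hconv).antisymm
    (recCone_subset_recCone_add_recCone _)

end RecessionCone

theorem trunc_MDecomposable_general {n : ℕ} (C : Set (EuclideanSpace ℝ (Fin n)))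
    (hcl : IsClosed C) (hconv : Convex ℝ C)
    (r : ℝ) (hner : (trunc C r).Nonempty) :
    IsClosed (trunc C r) ∧ Convex ℝ (trunc C r) ∧
    IsCompact (C ∩ closedBall 0 r) ∧ Convex ℝ (C ∩ closedBall 0 r) ∧
    recCone (trunc C r) = recCone C ∧
    trunc C r = (C ∩ closedBall 0 r) + recCone (trunc C r) := by
  have hMcpt : IsCompact (C ∩ closedBall 0 r) := (isCompact_closedBall 0 r).inter_left hcl
  have hMconv : Convex ℝ (C ∩ closedBall 0 r) := hconv.inter (convex_closedBall 0 r)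
  have hrec := recCone_trunc hcl hconv hner
  refine ⟨(isClosed_recCone hcl).add_left_of_isCompact hMcpt, hMconv.add convex_recCone,
    hMcpt, hMconv, hrec, ?_⟩
  rw [hrec]
  rfl

/-- a nonempty truncation `C_r` is M-decomposable with compact
component `C ∩ rB`. -/
theorem trunc_MDecomposable {n : ℕ} (C : Set (EuclideanSpace ℝ (Fin n)))
    (hne : C.Nonempty) (hcl : IsClosed C) (hconv : Convex ℝ C)
    (r : ℝ) (hr : 0 < r) (hner : (trunc C r).Nonempty) :
    IsClosed (trunc C r) ∧ Convex ℝ (trunc C r) ∧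
    IsCompact (C ∩ closedBall 0 r) ∧ Convex ℝ (C ∩ closedBall 0 r) ∧
    recCone (trunc C r) = recCone C ∧
    trunc C r = (C ∩ closedBall 0 r) + recCone (trunc C r) :=
  trunc_MDecomposable_general C hcl hconv r hner
end

section
/- The set C¹ = {x ∈ ℝ² : x₁x₂ ≥ 1, x₁ ≥ 0} is a nonempty closed convex set with recession cone rec C¹ = {x ∈ ℝ² : x₁ ≥ 0, x₂ ≥ 0}, and C¹ is approximately M-decomposable but not M-decomposable. -/
/-!
`C¹` lies in the closed quadrant `Q` and is upward closed, and no direction leaving `Q` can be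
followed forever inside `Q`; hence `rec C¹ = Q`. Clamping both coordinates of `x ∈ C¹` to
`[δ, δ⁻¹]` gives a point `c ∈ C¹` of norm at most `2δ⁻¹`, and `x - c` is a vector of `Q` plus an
error of at most `δ` per coordinate; this is approximate M-decomposability. If `C¹ = M + Q` with
`M` compact, then `M ⊆ C¹` is bounded, say by `R`, and a point of `C¹` with first coordinate
`(R + 1)⁻¹` would dominate some `m ∈ M` with `m₀ ≤ (R + 1)⁻¹` and `m₁ ≤ R`, so `m₀ m₁ < 1`.
-/

open scoped InnerProductSpace Pointwise ENNReal
open Metric Filter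

/-- The set `C¹ = {x ∈ ℝ² : x₁x₂ ≥ 1, x₁ ≥ 0}`. -/
def hyperbolaSet : Set (EuclideanSpace ℝ (Fin 2)) :=
  {x | 1 ≤ x 0 * x 1 ∧ 0 ≤ x 0}

section RecessionCone

variable {n : ℕ} {C M : Set (EuclideanSpace ℝ (Fin n))}

lemma zero_mem_recCone (C : Set (EuclideanSpace ℝ (Fin n))) : 0 ∈ recCone C :=
  fun x hx t _ => by simpa using hx

lemma subset_of_eq_add_recCone (h : C = M + recCone C) : M ⊆ C := fun m hm => by
  rw [h]
  simpa using Set.add_mem_add hm (zero_mem_recCone C)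

lemma coord_nonneg_of_mem_recCone (hC : C.Nonempty) {i : Fin n} (hCi : ∀ x ∈ C, 0 ≤ x i)
    {y : EuclideanSpace ℝ (Fin n)} (hy : y ∈ recCone C) : 0 ≤ y i := by
  obtain ⟨x, hx⟩ := hC
  by_contra! hyi
  have hxi := hCi x hx
  -- moving from `x` in direction `y` for time `t` brings the `i`-th coordinate down to `-1`
  set t := (x i + 1) / -y i
  have ht : t * y i = -(x i + 1) := by
    have := hyi.ne
    simp only [t]
    field_simp
  have := hCi _ (hy x hx t (div_nonneg (by linarith) (by linarith)))
  simp only [PiLp.add_apply, PiLp.smul_apply, smul_eq_mul, ht] at this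
  linarith

end RecessionCone

lemma norm_le_two_mul_of_abs_coord_le {x : EuclideanSpace ℝ (Fin 2)} {a : ℝ}
    (h0 : |x 0| ≤ a) (h1 : |x 1| ≤ a) : ‖x‖ ≤ 2 * a := by
  have ha : 0 ≤ a := (abs_nonneg _).trans h0
  rw [EuclideanSpace.norm_eq, Fin.sum_univ_two, Real.sqrt_le_left (by positivity)]
  simp only [Real.norm_eq_abs, sq_abs]
  nlinarith [abs_nonneg (x 0), abs_nonneg (x 1), sq_abs (x 0), sq_abs (x 1)]

lemma one_le_max_min_mul_max_min {δ a b : ℝ} (hδ : 0 < δ) (hδ1 : δ ≤ 1) (ha : 0 ≤ a)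
    (hab : 1 ≤ a * b) : 1 ≤ max δ (min a δ⁻¹) * max δ (min b δ⁻¹) := by
  have hδinv : δ ≤ δ⁻¹ := hδ1.trans (one_le_inv₀ hδ |>.2 hδ1)
  have hb : 0 ≤ b := by nlinarith
  rcases le_total δ⁻¹ a with ha' | ha'
  · calc (1 : ℝ) = δ⁻¹ * δ := (inv_mul_cancel₀ hδ.ne').symm
      _ ≤ max δ (min a δ⁻¹) * max δ (min b δ⁻¹) := by
        rw [min_eq_right ha', max_eq_right hδinv]
        gcongr
        exact le_max_left _ _
  rcases le_total δ⁻¹ b with hb' | hb'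
  · calc (1 : ℝ) = δ * δ⁻¹ := (mul_inv_cancel₀ hδ.ne').symm
      _ ≤ max δ (min a δ⁻¹) * max δ (min b δ⁻¹) := by
        rw [min_eq_right hb', max_eq_right hδinv]
        gcongr
        exact le_max_left _ _
  rw [min_eq_left ha', min_eq_left hb']
  calc (1 : ℝ) ≤ a * b := hab
    _ ≤ max δ a * max δ b := by gcongr <;> exact le_max_right _ _

lemma pos_of_mem_hyperbolaSet {x : EuclideanSpace ℝ (Fin 2)} (hx : x ∈ hyperbolaSet) :
    0 < x 0 ∧ 0 < x 1 := by
  obtain ⟨hx01, hx0⟩ := hx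
  have : 0 < x 0 * x 1 := by linarith
  exact ⟨lt_of_le_of_ne hx0 (by rintro h; simp [← h] at this), pos_of_mul_pos_right this hx0⟩

lemma mem_hyperbolaSet_of_le {x y : EuclideanSpace ℝ (Fin 2)} (hx : x ∈ hyperbolaSet)
    (h0 : x 0 ≤ y 0) (h1 : x 1 ≤ y 1) : y ∈ hyperbolaSet := by
  obtain ⟨hx0, hx1⟩ := pos_of_mem_hyperbolaSet hx
  exact ⟨hx.1.trans (mul_le_mul h0 h1 hx1.le (hx0.le.trans h0)), hx0.le.trans h0⟩

lemma hyperbolaSet_nonempty : hyperbolaSet.Nonempty :=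
  ⟨!₂[1, 1], by simp [hyperbolaSet]⟩

lemma isClosed_hyperbolaSet : IsClosed hyperbolaSet := by
  have hc (i : Fin 2) : Continuous fun x : EuclideanSpace ℝ (Fin 2) => x i :=
    (EuclideanSpace.proj i).continuous
  exact (isClosed_le continuous_const ((hc 0).mul (hc 1))).inter
    (isClosed_le continuous_const (hc 0))

lemma convex_hyperbolaSet : Convex ℝ hyperbolaSet := by
  have hepi : Convex ℝ {p : ℝ × ℝ | p.1 ∈ Set.Ioi 0 ∧ p.1 ^ (-1 : ℤ) ≤ p.2} :=
    (convexOn_zpow (𝕜 := ℝ) (-1)).convex_epigraph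
  have hpre : hyperbolaSet = (fun x : EuclideanSpace ℝ (Fin 2) => (x 0, x 1)) ⁻¹'
      {p : ℝ × ℝ | p.1 ∈ Set.Ioi 0 ∧ p.1 ^ (-1 : ℤ) ≤ p.2} := by
    ext x
    simp only [Set.mem_preimage, Set.mem_ofPred_eq, Set.mem_Ioi, zpow_neg_one]
    constructor
    · intro hx
      have hx0 := (pos_of_mem_hyperbolaSet hx).1
      exact ⟨hx0, (inv_le_iff_one_le_mul₀' hx0).2 hx.1⟩
    · rintro ⟨hx0, hx1⟩
      exact ⟨(inv_le_iff_one_le_mul₀' hx0).1 hx1, hx0.le⟩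
  rw [hpre]
  exact hepi.is_linear_preimage ⟨fun _ _ => rfl, fun _ _ => rfl⟩

lemma recCone_hyperbolaSet :
    recCone hyperbolaSet = {x : EuclideanSpace ℝ (Fin 2) | 0 ≤ x 0 ∧ 0 ≤ x 1} := by
  ext y
  constructor
  · intro hy
    have hcoord (i : Fin 2) : ∀ x ∈ hyperbolaSet, 0 ≤ x i := fun x hx => by
      fin_cases i
      exacts [(pos_of_mem_hyperbolaSet hx).1.le, (pos_of_mem_hyperbolaSet hx).2.le]
    exact ⟨coord_nonneg_of_mem_recCone hyperbolaSet_nonempty (hcoord 0) hy,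
      coord_nonneg_of_mem_recCone hyperbolaSet_nonempty (hcoord 1) hy⟩
  · rintro ⟨hy0, hy1⟩ x hx t ht
    exact mem_hyperbolaSet_of_le hx (by simpa using mul_nonneg ht hy0)
      (by simpa using mul_nonneg ht hy1)

lemma hyperbolaSet_subset_trunc_add_closedBall {δ : ℝ} (hδ : 0 < δ) (hδ1 : δ ≤ 1) :
    hyperbolaSet ⊆ trunc hyperbolaSet (2 * δ⁻¹) + closedBall 0 (2 * δ) := by
  intro x hx
  obtain ⟨hx0, hx1⟩ := pos_of_mem_hyperbolaSet hx
  have hδinv : δ ≤ δ⁻¹ := hδ1.trans (one_le_inv₀ hδ |>.2 hδ1)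
  set c : EuclideanSpace ℝ (Fin 2) := !₂[max δ (min (x 0) δ⁻¹), max δ (min (x 1) δ⁻¹)]
  set v : EuclideanSpace ℝ (Fin 2) := !₂[max (x 0 - c 0) 0, max (x 1 - c 1) 0]
  set w : EuclideanSpace ℝ (Fin 2) := !₂[min (x 0 - c 0) 0, min (x 1 - c 1) 0]
  have hc_mem : c ∈ hyperbolaSet :=
    ⟨by simpa [c] using one_le_max_min_mul_max_min hδ hδ1 hx.2 hx.1, by simp [c, hδ.le]⟩
  have hc_abs (i : Fin 2) : |max δ (min (x i) δ⁻¹)| ≤ δ⁻¹ :=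
    abs_le.2 ⟨by linarith [le_max_left δ (min (x i) δ⁻¹)], max_le hδinv (min_le_right _ _)⟩
  have hw_abs (i : Fin 2) (hxi : 0 ≤ x i) : |min (x i - max δ (min (x i) δ⁻¹)) 0| ≤ δ := by
    have hc : max δ (min (x i) δ⁻¹) ≤ δ + x i :=
      (max_le_max le_rfl (min_le_left _ _)).trans (max_le_add_of_nonneg hδ.le hxi)
    rw [abs_of_nonpos (min_le_right _ _), neg_le]
    exact le_min (by linarith) (by linarith)
  refine ⟨c + v, Set.add_mem_add ⟨hc_mem, ?_⟩ ?_, w, ?_, ?_⟩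
  · exact mem_closedBall_zero_iff.2
      (norm_le_two_mul_of_abs_coord_le (by simpa [c] using hc_abs 0) (by simpa [c] using hc_abs 1))
  · rw [recCone_hyperbolaSet]
    simp [v]
  · exact mem_closedBall_zero_iff.2 (norm_le_two_mul_of_abs_coord_le
      (by simpa [w, c] using hw_abs 0 hx0.le) (by simpa [w, c] using hw_abs 1 hx1.le))
  · ext i
    fin_cases i <;> simp [v, w] <;> linarith [max_add_min (x 0 - c 0) 0, max_add_min (x 1 - c 1) 0]

lemma approxMDecomposable_hyperbolaSet : ApproxMDecomposable hyperbolaSet := by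
  intro ε hε
  set δ := min (ε / 2) 1
  have hδ : 0 < δ := lt_min (by positivity) one_pos
  refine ⟨2 * δ⁻¹, by positivity,
    (hyperbolaSet_subset_trunc_add_closedBall hδ (min_le_right _ _)).trans
      (Set.add_subset_add_left (closedBall_subset_closedBall ?_))⟩
  linarith [min_le_left (ε / 2) 1]

lemma hyperbolaSet_not_subset_add_quadrant {M : Set (EuclideanSpace ℝ (Fin 2))}
    (hM : Bornology.IsBounded M) (hMC : M ⊆ hyperbolaSet) :
    ¬ hyperbolaSet ⊆ M + {x : EuclideanSpace ℝ (Fin 2) | 0 ≤ x 0 ∧ 0 ≤ x 1} := by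
  intro hC
  obtain ⟨R, hR, hMR⟩ := hM.subset_closedBall_lt 0 0
  have hx : !₂[(R + 1)⁻¹, R + 1] ∈ hyperbolaSet := by
    have : R + 1 ≠ 0 := by positivity
    exact ⟨by simp [inv_mul_cancel₀ this], by simp; positivity⟩
  obtain ⟨m, hm, v, ⟨hv0, -⟩, hmv⟩ := hC hx
  have hm0 : m 0 ≤ (R + 1)⁻¹ := by
    have := congrArg (· 0) hmv
    simp at this
    linarith
  have hm1 : m 1 ≤ R :=
    (Real.le_norm_self _).trans <|
      (PiLp.norm_apply_le m 1).trans (mem_closedBall_zero_iff.1 (hMR hm))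
  have : m 0 * m 1 < 1 :=
    calc m 0 * m 1 ≤ (R + 1)⁻¹ * R := mul_le_mul hm0 hm1 (pos_of_mem_hyperbolaSet (hMC hm)).2.le
          (by positivity)
      _ < 1 := by rw [inv_mul_lt_one₀ (by positivity)]; linarith
  linarith [(hMC hm).1]

lemma not_MDecomposable_hyperbolaSet : ¬ MDecomposable hyperbolaSet := by
  rintro ⟨M, hM, -, hCM⟩
  refine hyperbolaSet_not_subset_add_quadrant hM.isBounded (subset_of_eq_add_recCone hCM) ?_
  rw [← recCone_hyperbolaSet]
  exact hCM.subset

/-- `C¹` is nonempty closed convex with recession cone the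
nonnegative quadrant, and it is approximately M-decomposable but not
M-decomposable. -/
theorem hyperbolaSet_approxMDecomposable_not_MDecomposable :
    hyperbolaSet.Nonempty ∧ IsClosed hyperbolaSet ∧ Convex ℝ hyperbolaSet ∧
    recCone hyperbolaSet = {x : EuclideanSpace ℝ (Fin 2) | 0 ≤ x 0 ∧ 0 ≤ x 1} ∧
    ApproxMDecomposable hyperbolaSet ∧ ¬ MDecomposable hyperbolaSet :=
  ⟨hyperbolaSet_nonempty, isClosed_hyperbolaSet, convex_hyperbolaSet, recCone_hyperbolaSet,
    approxMDecomposable_hyperbolaSet, not_MDecomposable_hyperbolaSet⟩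
end

section
/- Let C² = {x ∈ ℝ² : x₂ ≥ x₁²} and define C = (C² × {0}) + cl cone(C² × {1}) ⊆ ℝ³, where cl cone denotes the closure of the cone generated by a set. Then C is a nonempty closed convex set with rec C = cl cone(C² × {1}), C is hyperbolic (indeed C ⊆ {(0,0,−1)} + rec C), but C is not approximately M-decomposable. -/
/-!
Writing points of `ℝ³` as `(x, y, z)`, the set is
`C = {z ≥ 0, x² ≤ y (1 + z)} = {z ≥ 0} ∩ (dpt + K)`, where
`K = {y ≥ 0, z ≥ 0, x² ≤ y z} = cl cone(C² × {1})` is the rotated second-order cone.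
Since `K` is a closed convex cone, `C` is closed and convex with `rec C = K`, and `C ⊆ dpt + rec C`.
For large `t` the parabola points `(t, t², 0) ∈ C` lie outside `C_r + ½B`: writing such a point
as `c + k + v` with `c ∈ C ∩ rB` (so `c_y, c_z ≥ 0`), `k ∈ K` and `‖v‖ ≤ 1/2` gives `k_z ≤ 1/2`,
hence `k_x² ≤ k_y / 2 ≤ (t² + 1/2) / 2`, whereas `k_x ≥ t - r - 1/2`.
-/

open scoped InnerProductSpace Pointwise ENNReal
open Metric Filter

/-- The cone generated by a set: `cone A = {λa : λ ≥ 0, a ∈ A}`. -/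
def coneOf {n : ℕ} (A : Set (EuclideanSpace ℝ (Fin n))) :
    Set (EuclideanSpace ℝ (Fin n)) :=
  {y | ∃ t : ℝ, 0 ≤ t ∧ ∃ a ∈ A, y = t • a}

/-- `C² × {0} ⊆ ℝ³`, where `C² = {x ∈ ℝ² : x₂ ≥ x₁²}`. -/
def parabolaBase : Set (EuclideanSpace ℝ (Fin 3)) :=
  {x | (x 0) ^ 2 ≤ x 1 ∧ x 2 = 0}

/-- `C² × {1} ⊆ ℝ³`, where `C² = {x ∈ ℝ² : x₂ ≥ x₁²}`. -/
def parabolaLift : Set (EuclideanSpace ℝ (Fin 3)) :=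
  {x | (x 0) ^ 2 ≤ x 1 ∧ x 2 = 1}

/-- The set `C = (C² × {0}) + cl cone(C² × {1}) ⊆ ℝ³`. -/
def exampleSet : Set (EuclideanSpace ℝ (Fin 3)) :=
  parabolaBase + closure (coneOf parabolaLift)

/-- The point `d = (0, 0, −1)ᵀ ∈ ℝ³`. -/
noncomputable def dpt : EuclideanSpace ℝ (Fin 3) :=
  (WithLp.equiv 2 (Fin 3 → ℝ)).symm ![0, 0, -1]


open Topology

local notation "ℝ³" => EuclideanSpace ℝ (Fin 3)

theorem sq_add_le_mul_add_of_sq_le_mul {a b c a' b' c' : ℝ} (hb : 0 ≤ b) (hc : 0 ≤ c)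
    (hb' : 0 ≤ b') (hc' : 0 ≤ c') (h : a ^ 2 ≤ b * c) (h' : a' ^ 2 ≤ b' * c') :
    (a + a') ^ 2 ≤ (b + b') * (c + c') := by
  -- `(a a')² ≤ (b c') (b' c)`, then AM-GM
  have hcross : 2 * (a * a') ≤ b * c' + b' * c := by
    rcases le_or_gt (a * a') 0 with hneg | hpos
    · nlinarith [mul_nonneg hb hc', mul_nonneg hb' hc]
    · nlinarith [sq_nonneg (b * c' - b' * c), mul_nonneg hb hc', mul_nonneg hb' hc,
        mul_le_mul h h' (sq_nonneg a') (mul_nonneg hb hc)]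
  nlinarith

section TopologicalVectorSpace

variable {E : Type*} [AddCommGroup E] [Module ℝ E] [TopologicalSpace E] [ContinuousAdd E]
  [ContinuousSMul ℝ E]

theorem mem_closure_of_forall_pos_add_smul_mem {S : Set E} {x e : E}
    (h : ∀ t : ℝ, 0 < t → x + t • e ∈ S) : x ∈ closure S := by
  have hlim : Tendsto (fun t : ℝ => x + t • e) (𝓝[>] 0) (𝓝 x) := by
    simpa using (tendsto_const_nhds.add ((tendsto_id (x := 𝓝 (0 : ℝ))).smul_const e)).mono_left
      nhdsWithin_le_nhds
  exact mem_closure_of_tendsto hlim (eventually_nhdsWithin_of_forall h)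

theorem IsClosed.mem_of_forall_pos_smul_add_mem {K : Set E} (hK : IsClosed K)
    (hsmul : ∀ c : ℝ, 0 ≤ c → ∀ x ∈ K, c • x ∈ K) {d p : E}
    (h : ∀ t : ℝ, 0 < t → t • d + p ∈ K) : d ∈ K := by
  have hlim : Tendsto (fun t : ℝ => d + t⁻¹ • p) atTop (𝓝 d) := by
    simpa using tendsto_const_nhds.add ((tendsto_inv_atTop_zero (𝕜 := ℝ)).smul_const p)
  refine hK.mem_of_tendsto hlim ?_
  filter_upwards [eventually_gt_atTop 0] with t ht
  have := hsmul t⁻¹ (inv_nonneg.2 ht.le) _ (h t ht)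
  rwa [smul_add, smul_smul, inv_mul_cancel₀ ht.ne', one_smul] at this

end TopologicalVectorSpace

def rotatedCone : Set ℝ³ :=
  {x | 0 ≤ x 1 ∧ 0 ≤ x 2 ∧ x 0 ^ 2 ≤ x 1 * x 2}

theorem add_mem_rotatedCone {x y : ℝ³} (hx : x ∈ rotatedCone) (hy : y ∈ rotatedCone) :
    x + y ∈ rotatedCone := by
  obtain ⟨hx1, hx2, hx0⟩ := hx
  obtain ⟨hy1, hy2, hy0⟩ := hy
  exact ⟨add_nonneg hx1 hy1, add_nonneg hx2 hy2,
    sq_add_le_mul_add_of_sq_le_mul hx1 hx2 hy1 hy2 hx0 hy0⟩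

theorem smul_mem_rotatedCone {c : ℝ} (hc : 0 ≤ c) {x : ℝ³} (hx : x ∈ rotatedCone) :
    c • x ∈ rotatedCone := by
  obtain ⟨hx1, hx2, hx0⟩ := hx
  refine ⟨mul_nonneg hc hx1, mul_nonneg hc hx2, ?_⟩
  simp only [PiLp.smul_apply, smul_eq_mul]
  calc (c * x 0) ^ 2 = c ^ 2 * x 0 ^ 2 := by ring
    _ ≤ c ^ 2 * (x 1 * x 2) := by gcongr
    _ = c * x 1 * (c * x 2) := by ring

theorem convex_rotatedCone : Convex ℝ rotatedCone :=
  fun _ hx _ hy _ _ ha hb _ ↦ add_mem_rotatedCone (smul_mem_rotatedCone ha hx)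
    (smul_mem_rotatedCone hb hy)

theorem isClosed_rotatedCone : IsClosed rotatedCone := by
  simp only [rotatedCone, Set.ofPred_and]
  exact (isClosed_le (by fun_prop) (by fun_prop)).inter
    ((isClosed_le (by fun_prop) (by fun_prop)).inter (isClosed_le (by fun_prop) (by fun_prop)))

theorem coneOf_parabolaLift_subset_rotatedCone : coneOf parabolaLift ⊆ rotatedCone := by
  rintro _ ⟨t, ht, a, ⟨ha, ha2⟩, rfl⟩
  exact smul_mem_rotatedCone ht ⟨(sq_nonneg _).trans ha, ha2 ▸ zero_le_one, by rwa [ha2, mul_one]⟩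

theorem mem_coneOf_parabolaLift {x : ℝ³} (hx : x ∈ rotatedCone) (hx2 : 0 < x 2) :
    x ∈ coneOf parabolaLift := by
  refine ⟨x 2, hx2.le, (x 2)⁻¹ • x, ⟨?_, ?_⟩, ?_⟩
  · simp only [PiLp.smul_apply, smul_eq_mul]
    calc ((x 2)⁻¹ * x 0) ^ 2 = (x 2)⁻¹ ^ 2 * x 0 ^ 2 := by ring
      _ ≤ (x 2)⁻¹ ^ 2 * (x 1 * x 2) := by gcongr; exact hx.2.2
      _ = (x 2)⁻¹ * x 1 := by field_simp
  · simp only [PiLp.smul_apply, smul_eq_mul]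
    exact inv_mul_cancel₀ hx2.ne'
  · rw [smul_smul, mul_inv_cancel₀ hx2.ne', one_smul]

theorem closure_coneOf_parabolaLift : closure (coneOf parabolaLift) = rotatedCone := by
  refine (closure_minimal coneOf_parabolaLift_subset_rotatedCone isClosed_rotatedCone).antisymm
    fun x hx ↦ mem_closure_of_forall_pos_add_smul_mem (e := !₂[0, 0, 1]) fun t ht ↦ ?_
  have he : (!₂[0, 0, 1] : ℝ³) ∈ rotatedCone := by simp [rotatedCone]
  refine mem_coneOf_parabolaLift (add_mem_rotatedCone hx (smul_mem_rotatedCone ht.le he)) ?_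
  simpa using add_pos_of_nonneg_of_pos hx.2.1 ht

theorem sub_dpt_mem_rotatedCone_iff {q : ℝ³} :
    q - dpt ∈ rotatedCone ↔ 0 ≤ q 1 ∧ 0 ≤ q 2 + 1 ∧ q 0 ^ 2 ≤ q 1 * (q 2 + 1) := by
  simp only [rotatedCone, Set.mem_ofPred_eq, dpt, WithLp.equiv_symm_apply, PiLp.sub_apply,
    Matrix.cons_val_one, Matrix.cons_val_zero, Matrix.cons_val, sub_zero, sub_neg_eq_add]

theorem exampleSet_eq : exampleSet = {q | 0 ≤ q 2 ∧ q - dpt ∈ rotatedCone} := by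
  rw [exampleSet, closure_coneOf_parabolaLift]
  ext q
  constructor
  · rintro ⟨p, ⟨hp, hp2⟩, k, hk, rfl⟩
    have hp' : p - dpt ∈ rotatedCone := sub_dpt_mem_rotatedCone_iff.2
      ⟨(sq_nonneg _).trans hp, by rw [hp2]; norm_num, by rwa [hp2, zero_add, mul_one]⟩
    refine ⟨?_, ?_⟩
    · simpa [hp2] using hk.2.1
    · rw [show p + k - dpt = p - dpt + k by abel]
      exact add_mem_rotatedCone hp' hk
  · rintro ⟨hq2, hq⟩
    obtain ⟨hq1, -, hq0⟩ := sub_dpt_mem_rotatedCone_iff.1 hq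
    -- `q = (a, a², 0) + (a q₂, q₁ - a², q₂)` with `a = q₀ / (q₂ + 1)`
    have hpos : 0 < q 2 + 1 := by linarith
    set a := q 0 / (q 2 + 1)
    have ha : q 0 = a * (q 2 + 1) := (div_mul_cancel₀ _ hpos.ne').symm
    have ha1 : a ^ 2 * (q 2 + 1) ≤ q 1 := by
      refine le_of_mul_le_mul_right ?_ hpos
      calc a ^ 2 * (q 2 + 1) * (q 2 + 1) = q 0 ^ 2 := by rw [ha]; ring
        _ ≤ q 1 * (q 2 + 1) := hq0
    refine ⟨!₂[a, a ^ 2, 0], ⟨by simp, by simp⟩, q - !₂[a, a ^ 2, 0], ?_, add_sub_cancel _ _⟩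
    simp only [rotatedCone, Set.mem_ofPred_eq, PiLp.sub_apply,
      Matrix.cons_val_zero, Matrix.cons_val_one, Matrix.cons_val, sub_zero]
    refine ⟨by nlinarith [mul_nonneg (sq_nonneg a) hq2], hq2, ?_⟩
    calc (q 0 - a) ^ 2 = a ^ 2 * q 2 * q 2 := by rw [ha]; ring
      _ ≤ (q 1 - a ^ 2) * q 2 := mul_le_mul_of_nonneg_right (by linarith) hq2

theorem recCone_exampleSet : recCone exampleSet = rotatedCone := by
  rw [exampleSet_eq]
  ext d
  refine ⟨fun hd ↦ ?_, fun hd x hx t ht ↦ ⟨?_, ?_⟩⟩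
  · have h0 : (0 : ℝ³) ∈ {q : ℝ³ | 0 ≤ q 2 ∧ q - dpt ∈ rotatedCone} := by
      simp [rotatedCone, dpt]
    refine isClosed_rotatedCone.mem_of_forall_pos_smul_add_mem
      (fun c hc _ hx ↦ smul_mem_rotatedCone hc hx) (p := -dpt) fun t ht ↦ ?_
    simpa [sub_eq_add_neg] using (hd 0 h0 t ht.le).2
  · simp only [PiLp.add_apply, PiLp.smul_apply, smul_eq_mul]
    exact add_nonneg hx.1 (mul_nonneg ht hd.2.1)
  · rw [add_sub_right_comm]
    exact add_mem_rotatedCone hx.2 (smul_mem_rotatedCone ht hd)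

theorem exampleSet_subset_dpt_add_recCone : exampleSet ⊆ {dpt} + recCone exampleSet := by
  intro q hq
  rw [exampleSet_eq] at hq
  rw [recCone_exampleSet]
  exact ⟨dpt, rfl, q - dpt, hq.2, add_sub_cancel _ _⟩

theorem isClosed_exampleSet : IsClosed exampleSet := by
  rw [exampleSet_eq, Set.ofPred_and]
  exact (isClosed_le (by fun_prop) (by fun_prop)).inter
    (isClosed_rotatedCone.preimage (by fun_prop))

theorem convex_exampleSet : Convex ℝ exampleSet := by
  have htranslate := convex_rotatedCone.translate_preimage_right (-dpt)
  simp only [neg_add_eq_sub] at htranslate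
  rw [exampleSet_eq, Set.ofPred_and]
  exact (convex_halfSpace_ge (EuclideanSpace.proj (2 : Fin 3)).isLinear 0).inter htranslate

theorem exists_rotatedCone_near_of_mem_trunc_add_closedBall {q : ℝ³} {r ε : ℝ}
    (hq : q ∈ trunc exampleSet r + closedBall 0 ε) :
    ∃ k ∈ rotatedCone, q 0 - (r + ε) ≤ k 0 ∧ k 1 ≤ q 1 + ε ∧ k 2 ≤ q 2 + ε := by
  obtain ⟨u, hu, v, hv, rfl⟩ := Set.mem_add.1 hq
  obtain ⟨c, ⟨hc, hcr⟩, k, hk, rfl⟩ := Set.mem_add.1 hu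
  rw [recCone_exampleSet] at hk
  rw [exampleSet_eq] at hc
  obtain ⟨hc2, hc⟩ := hc
  have hc1 := (sub_dpt_mem_rotatedCone_iff.1 hc).1
  rw [mem_closedBall_zero_iff] at hcr hv
  have hc0 : |c 0| ≤ r := (PiLp.norm_apply_le c 0).trans hcr
  have hv : ∀ i, |v i| ≤ ε := fun i ↦ (PiLp.norm_apply_le v i).trans hv
  refine ⟨k, hk, ?_, ?_, ?_⟩ <;> simp only [PiLp.add_apply]
  · linarith [abs_le.1 hc0, abs_le.1 (hv 0)]
  · linarith [abs_le.1 (hv 1)]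
  · linarith [abs_le.1 (hv 2)]

theorem not_approxMDecomposable_exampleSet : ¬ ApproxMDecomposable exampleSet := by
  intro h
  obtain ⟨r, hr, hsub⟩ := h (1 / 2) one_half_pos
  -- `t = 4 (r + 1)` makes `(t - r - 1/2)² > (t² + 1/2) / 2`
  set t := 4 * (r + 1)
  have ht : !₂[t, t ^ 2, 0] ∈ exampleSet := by
    rw [exampleSet_eq]
    simpa [rotatedCone, dpt] using sq_nonneg t
  obtain ⟨k, ⟨-, hk2, hk⟩, hk0, hk1, hk2'⟩ :=
    exists_rotatedCone_near_of_mem_trunc_add_closedBall (hsub ht)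
  simp only [one_div, Matrix.cons_val, zero_add] at hk0 hk1 hk2'
  have hk0' : 0 ≤ t - (r + 2⁻¹) := by linarith
  have hbound : (t - (r + 2⁻¹)) ^ 2 ≤ (t ^ 2 + 2⁻¹) * 2⁻¹ :=
    calc (t - (r + 2⁻¹)) ^ 2 ≤ k 0 ^ 2 := pow_le_pow_left₀ hk0' (by linarith) 2
      _ ≤ k 1 * k 2 := hk
      _ ≤ (t ^ 2 + 2⁻¹) * 2⁻¹ := mul_le_mul hk1 hk2' hk2 (by positivity)
  nlinarith

/-- `C = (C² × {0}) + cl cone(C² × {1})` is a nonempty closed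
convex set with `rec C = cl cone(C² × {1})`, it is hyperbolic (indeed
`C ⊆ {(0,0,−1)} + rec C`), but not approximately M-decomposable. -/
theorem exampleSet_hyperbolic_not_approxMDecomposable :
    exampleSet.Nonempty ∧ IsClosed exampleSet ∧ Convex ℝ exampleSet ∧
    recCone exampleSet = closure (coneOf parabolaLift) ∧
    exampleSet ⊆ {dpt} + recCone exampleSet ∧
    Hyperbolic exampleSet ∧
    ¬ ApproxMDecomposable exampleSet := by
  have hsub := exampleSet_subset_dpt_add_recCone
  refine ⟨⟨0, ?_⟩, isClosed_exampleSet, convex_exampleSet, ?_, hsub,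
    ⟨{dpt}, isCompact_singleton, convex_singleton _, hsub⟩, not_approxMDecomposable_exampleSet⟩
  · rw [exampleSet_eq]
    simp [rotatedCone, dpt]
  · rw [recCone_exampleSet, closure_coneOf_parabolaLift]
end
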